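/- Assume d1 ≥ d2, γ > 0, and G ∈ R^{d1×d2} has singular value decomposition G = U [Diag(σ); 0] Vᵀ with σ₁ ≥ … ≥ σ_{d2} ≥ 0. Then Prox_{γ‖·‖_*}(G) = U [Diag((σ − γ)_+); 0] Vᵀ, where (σ − γ)_+ applies t ↦ max(t − γ, 0) entrywise; i.e., singular value soft-thresholding minimizes X ↦ (1/2)‖X − G‖_F² + γ‖X‖_*. -/

import Mathlib

open scoped BigOperators
open Matrix

noncomputable def frobNorm {m k : Type*} [Fintype m] [Fintype k] (A : Matrix m k ℝ) : ℝ :=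
  Real.sqrt (∑ i, ∑ j, (A i j) ^ 2)

/-- The singular values of a real matrix, indexed by columns: square roots of the
eigenvalues of `Aᴴ * A`. -/
noncomputable def svals {m k : Type*} [Fintype m] [Fintype k] [DecidableEq k]
    (A : Matrix m k ℝ) : k → ℝ :=
  fun i => Real.sqrt ((Matrix.isHermitian_conjTranspose_mul_self A).eigenvalues i)

/-- The nuclear norm: sum of singular values. -/
noncomputable def nuclearNorm {m k : Type*} [Fintype m] [Fintype k] [DecidableEq k]
    (A : Matrix m k ℝ) : ℝ :=
  ∑ i, svals A i

/-- `P` is the proximal point of `X` under `γ‖·‖_*`: the minimizer of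
`U ↦ (1/2)‖U − X‖_F² + γ‖U‖_*`. -/
def IsProxNuc {d1 d2 : ℕ} (γ : ℝ) (X P : Matrix (Fin d1) (Fin d2) ℝ) : Prop :=
  ∀ U : Matrix (Fin d1) (Fin d2) ℝ,
    (1 / 2) * (frobNorm (P - X)) ^ 2 + γ * nuclearNorm P ≤
      (1 / 2) * (frobNorm (U - X)) ^ 2 + γ * nuclearNorm U

/-! Conjugation by the orthogonal `U`, `V` preserves both norms, so in the coordinates
`Z = Uᵀ Y V` the objective is `½‖Z − [Diag σ; 0]‖_F² + γ‖Z‖_*`. The Frobenius term splits into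
the off-diagonal part of `Z` plus `∑ⱼ (Zⱼⱼ − σⱼ)²`, and `‖Z‖_* ≥ ∑ⱼ |Zⱼⱼ|`: writing `Z = B Wᵀ`
with `W` an orthogonal eigenbasis of `ZᵀZ`, the columns of `B` have the singular values as
lengths, and Cauchy–Schwarz bounds each diagonal entry. The problem thus decouples into the
scalar problems `min ½(x − σⱼ)² + γ|x|`, whose minimizer `(σⱼ − γ)₊` beats every `x` by at least
`½(x − (σⱼ − γ)₊)²`; this margin gives uniqueness. -/

section Frobenius

variable {m k : Type*} [Fintype m] [Fintype k]

lemma sq_frobNorm (A : Matrix m k ℝ) : frobNorm A ^ 2 = ∑ i, ∑ j, A i j ^ 2 :=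
  Real.sq_sqrt (by positivity)

lemma frobNorm_eq_sqrt_trace (A : Matrix m k ℝ) : frobNorm A = √(trace (Aᵀ * A)) := by
  rw [frobNorm, trace, Finset.sum_comm]
  simp only [diag, mul_apply, transpose_apply, sq]

lemma frobNorm_eq_zero_iff {A : Matrix m k ℝ} : frobNorm A = 0 ↔ A = 0 := by
  have htrace := (posSemidef_conjTranspose_mul_self A).trace_nonneg
  rw [conjTranspose_eq_transpose_of_trivial] at htrace
  rw [frobNorm_eq_sqrt_trace, Real.sqrt_eq_zero htrace, ← conjTranspose_eq_transpose_of_trivial,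
    trace_conjTranspose_mul_self_eq_zero_iff]

@[simp]
lemma frobNorm_zero : frobNorm (0 : Matrix m k ℝ) = 0 :=
  frobNorm_eq_zero_iff.mpr rfl

lemma frobNorm_mul_mul_of_orthogonal [DecidableEq m] [DecidableEq k]
    {U : Matrix m m ℝ} {W : Matrix k k ℝ} (hU : Uᵀ * U = 1) (hW : W * Wᵀ = 1)
    (A : Matrix m k ℝ) : frobNorm (U * A * W) = frobNorm A := by
  have : (U * A * W)ᵀ * (U * A * W) = Wᵀ * (Aᵀ * A) * W := by
    simp only [transpose_mul, Matrix.mul_assoc, ← Matrix.mul_assoc Uᵀ U, hU, Matrix.one_mul]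
  rw [frobNorm_eq_sqrt_trace, frobNorm_eq_sqrt_trace, this, trace_mul_cycle,
    ← Matrix.mul_assoc, hW, Matrix.one_mul]

end Frobenius

namespace Matrix.IsHermitian

variable {k : Type*} [Fintype k] [DecidableEq k]

lemma sum_comp_eigenvalues_of_eq_diagonal {H : Matrix k k ℝ} (hH : H.IsHermitian)
    {d : k → ℝ} (h : H = diagonal d) (f : ℝ → ℝ) :
    ∑ i, f (hH.eigenvalues i) = ∑ i, f (d i) := by
  have hprod : (diagonal d).charpoly =
      ((Finset.univ.val.map d).map (Polynomial.X - Polynomial.C ·)).prod := by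
    rw [charpoly_diagonal, Multiset.map_map]; rfl
  have hroots : Finset.univ.val.map hH.eigenvalues = Finset.univ.val.map d := by
    have := hH.roots_charpoly_eq_eigenvalues
    rw [← h] at hprod
    rw [hprod, Polynomial.roots_multiset_prod_X_sub_C] at this
    simpa using this.symm
  calc ∑ i, f (hH.eigenvalues i) = ((Finset.univ.val.map hH.eigenvalues).map f).sum := by
        rw [Multiset.map_map]; rfl
    _ = ∑ i, f (d i) := by rw [hroots, Multiset.map_map]; rfl

lemma transpose_eigenvectorUnitary_mul_mul {H : Matrix k k ℝ} (hH : H.IsHermitian) :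
    (hH.eigenvectorUnitary : Matrix k k ℝ)ᵀ * H * hH.eigenvectorUnitary =
      diagonal hH.eigenvalues := by
  have := hH.conjStarAlgAut_star_eigenvectorUnitary
  rwa [Unitary.conjStarAlgAut_star_apply, star_eq_conjTranspose,
    conjTranspose_eq_transpose_of_trivial] at this

end Matrix.IsHermitian

section NuclearNorm

variable {m k : Type*} [Fintype m] [Fintype k] [DecidableEq k]

lemma svals_mul_mul_of_orthogonal [DecidableEq m] {U : Matrix m m ℝ} {W : Matrix k k ℝ}
    (hU : Uᵀ * U = 1) (hW : W * Wᵀ = 1) (A : Matrix m k ℝ) :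
    svals (U * A * W) = svals A := by
  have hcharpoly : ((U * A * W)ᴴ * (U * A * W)).charpoly = (Aᴴ * A).charpoly := by
    simp only [conjTranspose_eq_transpose_of_trivial, transpose_mul, Matrix.mul_assoc,
      ← Matrix.mul_assoc Uᵀ U, hU, Matrix.one_mul]
    rw [charpoly_mul_comm]
    simp only [Matrix.mul_assoc, hW, Matrix.mul_one]
  unfold svals
  rw [(IsHermitian.eigenvalues_eq_eigenvalues_iff _ _).mpr hcharpoly]

lemma nuclearNorm_mul_mul_of_orthogonal [DecidableEq m] {U : Matrix m m ℝ} {W : Matrix k k ℝ}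
    (hU : Uᵀ * U = 1) (hW : W * Wᵀ = 1) (A : Matrix m k ℝ) :
    nuclearNorm (U * A * W) = nuclearNorm A := by
  rw [nuclearNorm, nuclearNorm, svals_mul_mul_of_orthogonal hU hW]

end NuclearNorm

section EmbDiag

variable {m k : Type*} [DecidableEq m]

/-- With `e = Fin.castLEEmb _`, this is the rectangular diagonal matrix `[Diag(s); 0]`. -/
def embDiag (e : k ↪ m) (s : k → ℝ) : Matrix m k ℝ :=
  of fun i j => if i = e j then s j else 0

@[simp]
lemma embDiag_apply_self (e : k ↪ m) (s : k → ℝ) (j : k) : embDiag e s (e j) j = s j := by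
  simp [embDiag]

variable [Fintype m]

lemma transpose_embDiag_mul_embDiag [DecidableEq k] (e : k ↪ m) (s : k → ℝ) :
    (embDiag e s)ᵀ * embDiag e s = diagonal (fun j => s j ^ 2) := by
  ext j j'
  simp only [mul_apply, transpose_apply, embDiag, of_apply, diagonal_apply, mul_ite, ite_mul,
    mul_zero, zero_mul]
  by_cases h : j = j'
  · subst h; simp [sq]
  · simp [h, Ne.symm h]

variable [Fintype k]

lemma nuclearNorm_embDiag [DecidableEq k] (e : k ↪ m) (s : k → ℝ) :
    nuclearNorm (embDiag e s) = ∑ j, |s j| := by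
  simp only [nuclearNorm, svals]
  rw [IsHermitian.sum_comp_eigenvalues_of_eq_diagonal _ (by
    rw [conjTranspose_eq_transpose_of_trivial, transpose_embDiag_mul_embDiag])]
  simp [Real.sqrt_sq_eq_abs]

lemma sq_frobNorm_sub_embDiag (e : k ↪ m) (A : Matrix m k ℝ) (v : k → ℝ) :
    frobNorm (A - embDiag e v) ^ 2 =
      frobNorm (A - embDiag e (fun j => A (e j) j)) ^ 2 + ∑ j, (A (e j) j - v j) ^ 2 := by
  have hentry : ∀ i j, (A - embDiag e v) i j ^ 2 = (A - embDiag e (fun j => A (e j) j)) i j ^ 2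
      + if i = e j then (A (e j) j - v j) ^ 2 else 0 := by
    intro i j
    by_cases h : i = e j
    · subst h; simp [embDiag]
    · simp [embDiag, h]
  simp only [sq_frobNorm, hentry, Finset.sum_add_distrib]
  rw [Finset.sum_comm (f := fun i j => if i = e j then _ else _)]
  simp

end EmbDiag

lemma sum_abs_apply_embedding_le_nuclearNorm {m k : Type*} [Fintype m] [Fintype k]
    [DecidableEq k] (e : k ↪ m) (A : Matrix m k ℝ) : ∑ j, |A (e j) j| ≤ nuclearNorm A := by
  have hH : (Aᴴ * A).IsHermitian := isHermitian_conjTranspose_mul_self A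
  set W : Matrix k k ℝ := (hH.eigenvectorUnitary : Matrix k k ℝ)
  have hWtW : Wᵀ * W = 1 := by
    simpa [W, star_eq_conjTranspose] using Unitary.coe_star_mul_self hH.eigenvectorUnitary
  have hWWt : W * Wᵀ = 1 := mul_eq_one_comm.mp hWtW
  set B := A * W
  have hB : Bᵀ * B = diagonal hH.eigenvalues := by
    rw [← IsHermitian.transpose_eigenvectorUnitary_mul_mul hH]
    simp only [B, W, transpose_mul, Matrix.mul_assoc, conjTranspose_eq_transpose_of_trivial A]
  have hBcol (l : k) : ∑ i, B i l ^ 2 = hH.eigenvalues l := by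
    simpa [mul_apply, sq] using congrFun (congrFun hB l) l
  have hWcol (l : k) : ∑ j, W j l ^ 2 = 1 := by
    simpa [mul_apply, sq] using congrFun (congrFun hWtW l) l
  have hA (j : k) : A (e j) j = ∑ l, B (e j) l * W j l := by
    simp only [B, ← mul_apply, Matrix.mul_assoc, ← transpose_apply W, hWWt, Matrix.mul_one]
  calc ∑ j, |A (e j) j| ≤ ∑ j, ∑ l, |B (e j) l| * |W j l| := by
        refine Finset.sum_le_sum fun j _ => ?_
        rw [hA]
        exact (Finset.abs_sum_le_sum_abs _ _).trans_eq (by simp only [abs_mul])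
    _ = ∑ l, ∑ j, |B (e j) l| * |W j l| := Finset.sum_comm
    _ ≤ ∑ l, √(∑ j, B (e j) l ^ 2) * √(∑ j, W j l ^ 2) := by
        refine Finset.sum_le_sum fun l _ => ?_
        simpa only [sq_abs] using
          Real.sum_mul_le_sqrt_mul_sqrt _ (fun j => |B (e j) l|) (fun j => |W j l|)
    _ ≤ ∑ l, √(hH.eigenvalues l) := by
        refine Finset.sum_le_sum fun l _ => ?_
        rw [hWcol, Real.sqrt_one, mul_one, ← hBcol]
        refine Real.sqrt_le_sqrt ?_
        rw [← Finset.sum_map _ e (fun i => B i l ^ 2)]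
        exact Finset.sum_le_univ_sum_of_nonneg fun i => sq_nonneg _
    _ = nuclearNorm A := rfl

def softThreshold (γ t : ℝ) : ℝ := max (t - γ) 0

lemma softThreshold_objective_add_le {γ t : ℝ} (hγ : 0 ≤ γ) (ht : 0 ≤ t) (x : ℝ) :
    1 / 2 * (softThreshold γ t - t) ^ 2 + γ * |softThreshold γ t|
        + 1 / 2 * (x - softThreshold γ t) ^ 2 ≤ 1 / 2 * (x - t) ^ 2 + γ * |x| := by
  rw [softThreshold, abs_of_nonneg (le_max_right _ _)]
  rcases le_total t γ with h | h
  · rw [max_eq_right (by linarith)]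
    rcases abs_cases x with ⟨h2, h3⟩ | ⟨h2, h3⟩ <;> nlinarith
  · rw [max_eq_left (by linarith)]
    rcases abs_cases x with ⟨h2, h3⟩ | ⟨h2, h3⟩ <;> nlinarith

lemma svdSoftThreshold_objective_add_le {m k : Type*} [Fintype m] [Fintype k] [DecidableEq m]
    [DecidableEq k] (e : k ↪ m) {γ : ℝ} (hγ : 0 ≤ γ) {σ : k → ℝ} (hσ : ∀ j, 0 ≤ σ j)
    {U : Matrix m m ℝ} {V : Matrix k k ℝ} (hU : Uᵀ * U = 1) (hV : Vᵀ * V = 1)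
    (Z : Matrix m k ℝ) :
    let G := U * embDiag e σ * Vᵀ
    let P := U * embDiag e (fun j => softThreshold γ (σ j)) * Vᵀ
    1 / 2 * frobNorm (P - G) ^ 2 + γ * nuclearNorm P
        + 1 / 2 * frobNorm (Z - embDiag e (fun j => softThreshold γ (σ j))) ^ 2 ≤
      1 / 2 * frobNorm (U * Z * Vᵀ - G) ^ 2 + γ * nuclearNorm (U * Z * Vᵀ) := by
  intro G P
  set p := fun j => softThreshold γ (σ j)
  have hV' : Vᵀ * Vᵀᵀ = 1 := by rwa [transpose_transpose]
  have hPG : P - G = U * (embDiag e p - embDiag e σ) * Vᵀ := by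
    simp only [P, G, p, Matrix.mul_sub, Matrix.sub_mul]
  have hZG : U * Z * Vᵀ - G = U * (Z - embDiag e σ) * Vᵀ := by
    simp only [G, Matrix.mul_sub, Matrix.sub_mul]
  rw [hPG, hZG, frobNorm_mul_mul_of_orthogonal hU hV', frobNorm_mul_mul_of_orthogonal hU hV',
    nuclearNorm_mul_mul_of_orthogonal hU hV', nuclearNorm_mul_mul_of_orthogonal hU hV',
    nuclearNorm_embDiag, sq_frobNorm_sub_embDiag e _ σ, sq_frobNorm_sub_embDiag e Z σ,
    sq_frobNorm_sub_embDiag e Z p]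
  have hdiag := sum_abs_apply_embedding_le_nuclearNorm e Z
  have hscalar := Finset.sum_le_sum fun j (_ : j ∈ Finset.univ) =>
    softThreshold_objective_add_le hγ (hσ j) (Z (e j) j)
  simp only [Finset.sum_add_distrib, ← Finset.mul_sum] at hscalar
  simp only [embDiag_apply_self, sub_self, frobNorm_zero]
  linarith [mul_le_mul_of_nonneg_left hdiag hγ]

lemma of_ite_val_eq_val_eq_embDiag {d1 d2 : ℕ} (hd : d2 ≤ d1) (s : Fin d2 → ℝ) :
    (of fun (i : Fin d1) (j : Fin d2) => if (i : ℕ) = (j : ℕ) then s j else 0) =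
      embDiag (Fin.castLEEmb hd) s := by
  ext i j
  simp [embDiag, Fin.ext_iff]

theorem prox_nuclear_svd_soft_threshold_general {d1 d2 : ℕ} (hd : d2 ≤ d1) {γ : ℝ} (hγ : 0 < γ)
    (G : Matrix (Fin d1) (Fin d2) ℝ)
    (U : Matrix (Fin d1) (Fin d1) ℝ) (V : Matrix (Fin d2) (Fin d2) ℝ)
    (σ : Fin d2 → ℝ)
    (hU₁ : Uᵀ * U = 1) (hU₂ : U * Uᵀ = 1)
    (hV₁ : Vᵀ * V = 1) (hV₂ : V * Vᵀ = 1)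
    (hσ : ∀ i, 0 ≤ σ i)
    (hG : G = U * (Matrix.of fun (i : Fin d1) (j : Fin d2) =>
      if (i : ℕ) = (j : ℕ) then σ j else 0) * Vᵀ) :
    let P : Matrix (Fin d1) (Fin d2) ℝ :=
      U * (Matrix.of fun (i : Fin d1) (j : Fin d2) =>
        if (i : ℕ) = (j : ℕ) then max (σ j - γ) 0 else 0) * Vᵀ
    IsProxNuc γ G P ∧
      ∀ X : Matrix (Fin d1) (Fin d2) ℝ,
        (∀ Y : Matrix (Fin d1) (Fin d2) ℝ,
          (1 / 2) * (frobNorm (X - G)) ^ 2 + γ * nuclearNorm X ≤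
            (1 / 2) * (frobNorm (Y - G)) ^ 2 + γ * nuclearNorm Y) → X = P := by
  intro P
  set S := embDiag (Fin.castLEEmb hd) fun j => softThreshold γ (σ j)
  have hP : P = U * S * Vᵀ := by
    simp only [P, S, softThreshold, of_ite_val_eq_val_eq_embDiag hd]
  rw [of_ite_val_eq_val_eq_embDiag hd] at hG
  have hconj (Y : Matrix (Fin d1) (Fin d2) ℝ) : U * (Uᵀ * Y * V) * Vᵀ = Y := by
    simp only [← Matrix.mul_assoc, hU₂, Matrix.one_mul]
    simp only [Matrix.mul_assoc, hV₂, Matrix.mul_one]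
  have key (Y : Matrix (Fin d1) (Fin d2) ℝ) :
      1 / 2 * frobNorm (P - G) ^ 2 + γ * nuclearNorm P + 1 / 2 * frobNorm (Uᵀ * Y * V - S) ^ 2 ≤
        1 / 2 * frobNorm (Y - G) ^ 2 + γ * nuclearNorm Y := by
    simpa only [hG, hP, hconj] using
      svdSoftThreshold_objective_add_le (Fin.castLEEmb hd) hγ.le hσ hU₁ hV₁ (Uᵀ * Y * V)
  refine ⟨fun Y => ?_, fun X hX => ?_⟩
  · linarith [key Y, sq_nonneg (frobNorm (Uᵀ * Y * V - S))]
  · have hdist : frobNorm (Uᵀ * X * V - S) ^ 2 ≤ 0 := by linarith [key X, hX P]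
    have hXS : Uᵀ * X * V = S :=
      sub_eq_zero.mp (frobNorm_eq_zero_iff.mp (pow_eq_zero_iff two_ne_zero |>.mp
        (le_antisymm hdist (sq_nonneg _))))
    rw [← hconj X, hXS, hP]

/-- Singular value soft-thresholding computes the proximal mapping of `γ‖·‖_*`:
if `G = U [Diag(σ); 0] Vᵀ` is an SVD (with `U`, `V` orthogonal and
`σ₁ ≥ … ≥ σ_{d2} ≥ 0`), then `U [Diag((σ−γ)₊); 0] Vᵀ` is the unique minimizer of
`X ↦ (1/2)‖X − G‖_F² + γ‖X‖_*`. -/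
theorem prox_nuclear_svd_soft_threshold {d1 d2 : ℕ} (hd : d2 ≤ d1) {γ : ℝ} (hγ : 0 < γ)
    (G : Matrix (Fin d1) (Fin d2) ℝ)
    (U : Matrix (Fin d1) (Fin d1) ℝ) (V : Matrix (Fin d2) (Fin d2) ℝ)
    (σ : Fin d2 → ℝ)
    (hU₁ : Uᵀ * U = 1) (hU₂ : U * Uᵀ = 1)
    (hV₁ : Vᵀ * V = 1) (hV₂ : V * Vᵀ = 1)
    (hσ : ∀ i, 0 ≤ σ i) (hσmono : ∀ i j : Fin d2, i ≤ j → σ j ≤ σ i)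
    (hG : G = U * (Matrix.of fun (i : Fin d1) (j : Fin d2) =>
      if (i : ℕ) = (j : ℕ) then σ j else 0) * Vᵀ) :
    let P : Matrix (Fin d1) (Fin d2) ℝ :=
      U * (Matrix.of fun (i : Fin d1) (j : Fin d2) =>
        if (i : ℕ) = (j : ℕ) then max (σ j - γ) 0 else 0) * Vᵀ
    IsProxNuc γ G P ∧
      ∀ X : Matrix (Fin d1) (Fin d2) ℝ,
        (∀ Y : Matrix (Fin d1) (Fin d2) ℝ,
          (1 / 2) * (frobNorm (X - G)) ^ 2 + γ * nuclearNorm X ≤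
            (1 / 2) * (frobNorm (Y - G)) ^ 2 + γ * nuclearNorm Y) → X = P :=
  prox_nuclear_svd_soft_threshold_general hd hγ G U V σ hU₁ hU₂ hV₁ hV₂ hσ hG
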